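/- Let (R,m) be a Cohen–Macaulay local ring, I an m-primary ideal, J a minimal reduction of I with λ(I^{n+1}/J I^n) = 1, and suppose z ∈ I satisfies I^{n+1} = J I^n + (z^{n+1}). Then I^{t+1} = J I^t + (z^{t+1}) for every t ≥ n. -/

import Mathlib

open IsLocalRing

/-- The length of an `R`-module `M`, defined as the Krull dimension of its
lattice of submodules. -/
noncomputable def moduleLength (R M : Type*) [CommRing R] [AddCommGroup M]
    [Module R M] : WithBot ℕ∞ :=
  Order.krullDim (Submodule R M)

/-- `λ(R/I)`, as an extended natural number. -/
noncomputable def quotLength {R : Type*} [CommRing R] (I : Ideal R) : WithBot ℕ∞ :=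
  moduleLength R (R ⧸ I)

/-- `λ(R/I)` as a natural number (junk value if infinite). -/
noncomputable def quotLengthNat {R : Type*} [CommRing R] (I : Ideal R) : ℕ :=
  (WithBot.unbotD 0 (quotLength I)).toNat

/-- `λ(I/J)` for ideals (more precisely, the length of `I/(I ∩ J)`). -/
noncomputable def subLength {R : Type*} [CommRing R] (I J : Ideal R) : WithBot ℕ∞ :=
  moduleLength R (↥I ⧸ (Submodule.comap I.subtype J))

/-- `λ(I/J)` as a natural number (junk value if infinite). -/
noncomputable def subLengthNat {R : Type*} [CommRing R] (I J : Ideal R) : ℕ :=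
  (WithBot.unbotD 0 (subLength I J)).toNat

/-- `J` is a reduction of `I`: `J ⊆ I` and `I^{n+1} = J I^n` for some `n`. -/
def IsReduction {R : Type*} [CommRing R] (J I : Ideal R) : Prop :=
  J ≤ I ∧ ∃ n : ℕ, I ^ (n + 1) = J * I ^ n

/-- `J` is a minimal reduction of `I`. -/
def IsMinimalReduction {R : Type*} [CommRing R] (J I : Ideal R) : Prop :=
  IsReduction J I ∧ ∀ K : Ideal R, IsReduction K I → K ≤ J → K = J

/-- An ideal of a local ring is `m`-primary iff its radical is the maximal ideal. -/
def IsMPrimary {R : Type*} [CommRing R] [IsLocalRing R] (I : Ideal R) : Prop :=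
  I.radical = maximalIdeal R

/-- The depth of `R` at `M` is at least `k`: there is a regular sequence of
length `k` contained in `M`. -/
def DepthGE (R : Type*) [CommRing R] (M : Ideal R) (k : ℕ) : Prop :=
  ∃ rs : List R, (∀ x ∈ rs, x ∈ M) ∧ RingTheory.Sequence.IsRegular R rs ∧
    rs.length = k

/-- A ring `R` is Cohen–Macaulay at the (maximal) ideal `M` if there is a
regular sequence inside `M` of length equal to the Krull dimension of `R`. -/
def IsCohenMacaulayAt (R : Type*) [CommRing R] (M : Ideal R) : Prop :=
  ∃ rs : List R, (∀ x ∈ rs, x ∈ M) ∧ RingTheory.Sequence.IsRegular R rs ∧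
    (rs.length : WithBot ℕ∞) = ringKrullDim R

/-- A local ring is Cohen–Macaulay if its depth equals its dimension. -/
def IsCMLocalRing (R : Type*) [CommRing R] [IsLocalRing R] : Prop :=
  IsCohenMacaulayAt R (maximalIdeal R)

/-- A ring `R` is Gorenstein at the (maximal) ideal `M` if it is
Cohen–Macaulay there and cutting down by a maximal regular sequence `rs`
leaves a ring whose socle `((rs) : M)/(rs)` has length one (type one). -/
def IsGorensteinAt (R : Type*) [CommRing R] (M : Ideal R) : Prop :=
  ∃ rs : List R, (∀ x ∈ rs, x ∈ M) ∧ RingTheory.Sequence.IsRegular R rs ∧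
    (rs.length : WithBot ℕ∞) = ringKrullDim R ∧
    subLength (Submodule.colon (Ideal.span {x | x ∈ rs}) M)
      (Ideal.span {x | x ∈ rs}) = 1

/-- A local ring is Gorenstein if it is Gorenstein at its maximal ideal. -/
def IsGorensteinLocalRing (R : Type*) [CommRing R] [IsLocalRing R] : Prop :=
  IsGorensteinAt R (maximalIdeal R)

/-- The associated graded ring `gr_I(R) = ⊕ₙ Iⁿ/Iⁿ⁺¹`, realized as
`R[It]/I·R[It]` where `R[It]` is the Rees algebra of `I`. -/
noncomputable def grRing {R : Type*} [CommRing R] (I : Ideal R) : Type _ :=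
  (reesAlgebra I) ⧸ (Ideal.span ((algebraMap R (reesAlgebra I)) '' (I : Set R)))

noncomputable instance {R : Type*} [CommRing R] (I : Ideal R) :
    CommRing (grRing I) :=
  inferInstanceAs (CommRing ((reesAlgebra I) ⧸
    (Ideal.span ((algebraMap R (reesAlgebra I)) '' (I : Set R)))))

/-- The maximal homogeneous ideal `m/I ⊕ gr_I(R)₊` of `gr_I(R)`, where `M`
is the maximal ideal of `R`: it is the image of the ideal of the Rees algebra
consisting of those elements whose degree-zero coefficient lies in `M`. -/
noncomputable def grMaxIdeal {R : Type*} [CommRing R] (I : Ideal R)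
    (M : Ideal R) : Ideal (grRing I) :=
  Ideal.span ((Ideal.Quotient.mk _) ''
    {x : reesAlgebra I | Polynomial.coeff (x : Polynomial R) 0 ∈ M})
/-- if `λ(Iⁿ⁺¹/JIⁿ) = 1` and `z ∈ I` satisfies
`Iⁿ⁺¹ = JIⁿ + (zⁿ⁺¹)`, then `Iᵗ⁺¹ = JIᵗ + (zᵗ⁺¹)` for every `t ≥ n`. -/
theorem statement13 {R : Type*} [CommRing R] [IsNoetherianRing R] [IsLocalRing R]
    (hCM : IsCMLocalRing R)
    (I J : Ideal R) (hI : IsMPrimary I) (hJ : IsMinimalReduction J I)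
    (n : ℕ) (hlen : subLength (I ^ (n + 1)) (J * I ^ n) = 1)
    (z : R) (hz : z ∈ I)
    (hzn : I ^ (n + 1) = J * I ^ n ⊔ Ideal.span {z ^ (n + 1)}) :
    ∀ t : ℕ, n ≤ t → I ^ (t + 1) = J * I ^ t ⊔ Ideal.span {z ^ (t + 1)} := by
  intro t ht
  induction t, ht using Nat.le_induction with
  | base => exact hzn
  | succ t ht ih =>
    have hJI : J ≤ I := hJ.1.1
    have key : I * Ideal.span {z ^ (t + 1)} ≤
        J * I ^ (t + 1) ⊔ Ideal.span {z ^ (t + 1 + 1)} := by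
      rw [Ideal.mul_le]
      intro r hr s hs
      rw [Ideal.mem_span_singleton'] at hs
      obtain ⟨c, rfl⟩ := hs
      have h1 : r * z ^ n ∈ I ^ (n + 1) := by
        rw [pow_succ']
        exact Ideal.mul_mem_mul hr (Ideal.pow_mem_pow hz n)
      rw [hzn] at h1
      obtain ⟨b, hb, d, hd, hbd⟩ := Submodule.mem_sup.mp h1
      rw [Ideal.mem_span_singleton'] at hd
      obtain ⟨e, rfl⟩ := hd
      have h2 : r * z ^ (t + 1) = b * z ^ (t + 1 - n) + e * z ^ (t + 1 + 1) := by
        calc r * z ^ (t + 1) = (r * z ^ n) * z ^ (t + 1 - n) := by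
              rw [mul_assoc, ← pow_add]
              congr 2
              omega
          _ = (b + e * z ^ (n + 1)) * z ^ (t + 1 - n) := by rw [hbd]
          _ = b * z ^ (t + 1 - n) + e * z ^ (t + 1 + 1) := by
              have h3 : n + 1 + (t + 1 - n) = t + 1 + 1 := by omega
              rw [add_mul, mul_assoc, ← pow_add, h3]
      have heq : r * (c * z ^ (t + 1)) =
          c * (b * z ^ (t + 1 - n)) + (c * e) * z ^ (t + 1 + 1) := by
        calc r * (c * z ^ (t + 1)) = c * (r * z ^ (t + 1)) := by ring
          _ = _ := by rw [h2]; ring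
      rw [heq]
      apply Submodule.add_mem
      · apply Submodule.mem_sup_left
        apply Ideal.mul_mem_left
        have hmem : b * z ^ (t + 1 - n) ∈ (J * I ^ n) * I ^ (t + 1 - n) :=
          Ideal.mul_mem_mul hb (Ideal.pow_mem_pow hz _)
        have hmul : (J * I ^ n) * I ^ (t + 1 - n) = J * I ^ (t + 1) := by
          rw [mul_assoc, ← pow_add]
          congr 2
          omega
        rwa [hmul] at hmem
      · exact Submodule.mem_sup_right
          (Ideal.mem_span_singleton'.mpr ⟨c * e, rfl⟩)
    have expand : I ^ (t + 1 + 1) = J * I ^ (t + 1) ⊔ I * Ideal.span {z ^ (t + 1)} := by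
      calc I ^ (t + 1 + 1) = I * I ^ (t + 1) := by rw [pow_succ']
        _ = I * (J * I ^ t ⊔ Ideal.span {z ^ (t + 1)}) := by rw [ih]
        _ = I * (J * I ^ t) ⊔ I * Ideal.span {z ^ (t + 1)} := Ideal.mul_sup _ _ _
        _ = J * I ^ (t + 1) ⊔ I * Ideal.span {z ^ (t + 1)} := by
            rw [show I * (J * I ^ t) = J * (I * I ^ t) by ring, ← pow_succ']
    apply le_antisymm
    · rw [expand]
      exact sup_le le_sup_left key
    · apply sup_le
      · calc J * I ^ (t + 1) ≤ I * I ^ (t + 1) := Ideal.mul_mono hJI le_rfl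
          _ = I ^ (t + 1 + 1) := (pow_succ' I (t + 1)).symm
      · rw [Ideal.span_le, Set.singleton_subset_iff]
        exact Ideal.pow_mem_pow hz _
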